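/- Let n ≥ 2 and let σ be an irreducible complex representation of the symmetric group S_n. Then Hom_{S_n}(σ ⊗ refl, σ) = 0 if and only if the restriction of σ to S_{n-1} is irreducible, where refl is the standard (n−1)-dimensional representation of S_n and S_{n-1} ⊂ S_n is the stabilizer of the letter n. -/

import Mathlib

open TensorProduct

noncomputable section

/-- The standard (reflection) representation of `S_n`: the subspace
`{x ∈ ℂⁿ : x₁ + ⋯ + x_n = 0}` of the permutation representation `ℂⁿ`. -/
def reflSpace (n : ℕ) : Submodule ℂ (Fin n → ℂ) :=
  LinearMap.ker (∑ i : Fin n, LinearMap.proj i)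

/-- The linear action of a permutation `g` on `ℂⁿ`, `(g • x) i = x (g⁻¹ i)`. -/
def permL (n : ℕ) (g : Equiv.Perm (Fin n)) : (Fin n → ℂ) →ₗ[ℂ] (Fin n → ℂ) :=
  LinearMap.funLeft ℂ ℂ ⇑g⁻¹

/-- The action of a permutation `g` on the reflection representation. -/
def reflMap (n : ℕ) (g : Equiv.Perm (Fin n)) : reflSpace n →ₗ[ℂ] reflSpace n :=
  (permL n g).restrict (p := reflSpace n) (q := reflSpace n) (fun x hx => by
    simp only [reflSpace, LinearMap.mem_ker, LinearMap.sum_apply, LinearMap.proj_apply] at hx ⊢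
    simpa [permL, LinearMap.funLeft] using (Equiv.sum_comp g⁻¹ x).trans hx)

/-- The letter `n` in `Fin n`. -/
def lastIdx (n : ℕ) (hn : 0 < n) : Fin n := ⟨n - 1, by omega⟩

/-- The subgroup `S_{n-1} ⊆ S_n`, the stabilizer of the letter `n`. -/
def stabLast (n : ℕ) (hn : 0 < n) : Subgroup (Equiv.Perm (Fin n)) :=
  MulAction.stabilizer (Equiv.Perm (Fin n)) (lastIdx n hn)


-- vv vectors
def vv (n : ℕ) (i : Fin n) : Fin n → ℂ := fun j => (if j = i then 1 else 0) - (n : ℂ)⁻¹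

lemma mem_reflSpace_iff {n : ℕ} {w : Fin n → ℂ} : w ∈ reflSpace n ↔ ∑ j, w j = 0 := by
  simp [reflSpace, LinearMap.mem_ker]

lemma vv_mem {n : ℕ} (hn : 0 < n) (i : Fin n) : vv n i ∈ reflSpace n := by
  have hne : (n:ℂ) ≠ 0 := Nat.cast_ne_zero.mpr hn.ne'
  rw [mem_reflSpace_iff]
  simp [vv, Finset.sum_sub_distrib, Finset.sum_ite_eq', Finset.card_univ, mul_inv_cancel₀ hne]

def vvS {n : ℕ} (hn : 0 < n) (i : Fin n) : reflSpace n := ⟨vv n i, vv_mem hn i⟩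

lemma reflMap_coe {n : ℕ} (g : Equiv.Perm (Fin n)) (w : reflSpace n) :
    (reflMap n g w : Fin n → ℂ) = fun j => (w : Fin n → ℂ) (g⁻¹ j) := rfl

lemma reflMap_vvS {n : ℕ} (hn : 0 < n) (g : Equiv.Perm (Fin n)) (i : Fin n) :
    reflMap n g (vvS hn i) = vvS hn (g i) := by
  apply Subtype.ext
  rw [reflMap_coe]
  funext j
  show vv n i (g⁻¹ j) = vv n (g i) j
  simp only [vv]
  congr 1
  by_cases h : j = g i
  · simp [h]
  · rw [if_neg h, if_neg]
    intro hc
    exact h (by rw [← hc]; simp)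

lemma eq_sum_vvS {n : ℕ} (hn : 0 < n) (w : reflSpace n) :
    w = ∑ j, (w : Fin n → ℂ) j • vvS hn j := by
  have hw : ∑ j, (w : Fin n → ℂ) j = 0 := mem_reflSpace_iff.mp w.2
  apply Subtype.ext
  funext k
  have : ((∑ j, (w : Fin n → ℂ) j • vvS hn j : reflSpace n) : Fin n → ℂ) k
      = ∑ j, (w : Fin n → ℂ) j * vv n j k := by
    simp [vvS]
  rw [this]
  simp only [vv, mul_sub, Finset.sum_sub_distrib, mul_ite, mul_one, mul_zero]
  rw [Finset.sum_ite_eq, ← Finset.sum_mul, hw]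
  simp

lemma sum_vvS {n : ℕ} (hn : 0 < n) : ∑ i, vvS hn i = 0 := by
  have hne : (n:ℂ) ≠ 0 := Nat.cast_ne_zero.mpr hn.ne'
  apply Subtype.ext
  funext j
  have : ((∑ i, vvS hn i : reflSpace n) : Fin n → ℂ) j = ∑ i, vv n i j := by simp [vvS]
  rw [this]
  simp [vv, Finset.sum_sub_distrib, Finset.sum_ite_eq, Finset.card_univ, mul_inv_cancel₀ hne]

-- Schur
lemma schur_scalar {X : Type*} [AddCommGroup X] [Module ℂ X] [FiniteDimensional ℂ X]
    [Nontrivial X] {ι : Type*} (T : ι → Module.End ℂ X)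
    (hirr : ∀ U : Submodule ℂ X, (∀ i, ∀ x ∈ U, T i x ∈ U) → U = ⊥ ∨ U = ⊤)
    (φ : Module.End ℂ X) (hcomm : ∀ i, T i * φ = φ * T i) :
    ∃ c : ℂ, ∀ x, φ x = c • x := by
  obtain ⟨c, hc⟩ := Module.End.exists_eigenvalue φ
  refine ⟨c, ?_⟩
  have hU : ∀ i, ∀ x ∈ φ.eigenspace c, T i x ∈ φ.eigenspace c := by
    intro i x hx
    rw [Module.End.mem_eigenspace_iff] at hx ⊢
    have h1 : T i (φ x) = φ (T i x) := by
      have := congrArg (fun ψ : Module.End ℂ X => ψ x) (hcomm i)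
      simpa [Module.End.mul_apply] using this
    rw [← h1, hx, map_smul]
  rcases hirr _ hU with h | h
  · exact absurd h hc
  · intro x
    exact Module.End.mem_eigenspace_iff.mp (h ▸ Submodule.mem_top)

lemma avg_proj {n : ℕ} (hn : 0 < n) {X : Type*} [AddCommGroup X] [Module ℂ X]
    (σ : Representation ℂ (Equiv.Perm (Fin n)) X)
    (U : Submodule ℂ X) (hU : ∀ h ∈ stabLast n hn, ∀ x ∈ U, σ h x ∈ U) :
    ∃ φ : Module.End ℂ X, (∀ h ∈ stabLast n hn, σ h * φ = φ * σ h) ∧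
      (∀ x, φ x ∈ U) ∧ (∀ x ∈ U, φ x = x) := by
  classical
  haveI : Fintype (stabLast n hn) := Fintype.ofFinite _
  obtain ⟨V, hV⟩ := Submodule.exists_isCompl U
  set π : Module.End ℂ X := U.subtype ∘ₗ U.projectionOnto V hV with hπ
  have hπ_mem : ∀ x, π x ∈ U := fun x => (U.projectionOnto V hV x).2
  have hπ_id : ∀ x ∈ U, π x = x := by
    intro x hx
    show U.subtype (U.projectionOnto V hV x) = x
    rw [show x = ((⟨x, hx⟩ : U) : X) from rfl, Submodule.projectionOnto_apply_left hV]
    rfl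
  set m : ℂ := (Fintype.card (stabLast n hn) : ℂ) with hm_def
  have hm : m ≠ 0 := Nat.cast_ne_zero.mpr Fintype.card_ne_zero
  set S : Module.End ℂ X := ∑ h : stabLast n hn, σ ↑h * π * σ (↑h)⁻¹ with hS
  have key : ∀ h0 : stabLast n hn, σ ↑h0 * S = S * σ ↑h0 := by
    intro h0
    rw [hS, Finset.mul_sum, Finset.sum_mul]
    refine Fintype.sum_equiv (Equiv.mulLeft h0) _ _ ?_
    intro h
    show σ ↑h0 * (σ ↑h * π * σ (↑h)⁻¹) = σ ↑(h0 * h) * π * σ (↑(h0 * h))⁻¹ * σ ↑h0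
    have hσ : σ (↑h0)⁻¹ * σ ↑h0 = 1 := by rw [← map_mul, inv_mul_cancel, map_one]
    simp [Subgroup.coe_mul, mul_inv_rev, map_mul, mul_assoc, hσ]
  refine ⟨m⁻¹ • S, ?_, ?_, ?_⟩
  · intro h hmem
    have := key ⟨h, hmem⟩
    rw [mul_smul_comm, smul_mul_assoc, this]
  · intro x
    have : (m⁻¹ • S) x = m⁻¹ • ∑ h : stabLast n hn, σ ↑h (π (σ (↑h)⁻¹ x)) := by
      simp [hS, LinearMap.sum_apply, Module.End.mul_apply]
    rw [this]
    refine Submodule.smul_mem _ _ (Submodule.sum_mem _ fun h _ => ?_)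
    exact hU ↑h h.2 _ (hπ_mem _)
  · intro x hx
    have hterm : ∀ h : stabLast n hn, σ ↑h (π (σ (↑h)⁻¹ x)) = x := by
      intro h
      have h1 : σ (↑h)⁻¹ x ∈ U := by
        have : (↑h)⁻¹ = ((h⁻¹ : stabLast n hn) : Equiv.Perm (Fin n)) := rfl
        rw [this]
        exact hU _ (h⁻¹).2 x hx
      rw [hπ_id _ h1]
      have : σ ↑h (σ (↑h)⁻¹ x) = (σ (↑h * (↑h)⁻¹)) x := by rw [map_mul]; rfl
      rw [this, mul_inv_cancel, map_one]; rfl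
    have : (m⁻¹ • S) x = m⁻¹ • ∑ h : stabLast n hn, σ ↑h (π (σ (↑h)⁻¹ x)) := by
      simp [hS, LinearMap.sum_apply, Module.End.mul_apply]
    rw [this]
    simp only [hterm, Finset.sum_const, Finset.card_univ, smul_smul]
    rw [← Nat.cast_smul_eq_nsmul ℂ, smul_smul, ← hm_def, inv_mul_cancel₀ hm, one_smul]

lemma conj_swap {n : ℕ} (hn : 0 < n) {X : Type*} [AddCommGroup X] [Module ℂ X]
    (σ : Representation ℂ (Equiv.Perm (Fin n)) X) (φ : Module.End ℂ X)
    (hφ : ∀ h ∈ stabLast n hn, σ h * φ = φ * σ h) (g : Equiv.Perm (Fin n)) (i : Fin n) :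
    σ g * (σ (Equiv.swap (lastIdx n hn) i) * φ * σ (Equiv.swap (lastIdx n hn) i)) =
      (σ (Equiv.swap (lastIdx n hn) (g i)) * φ * σ (Equiv.swap (lastIdx n hn) (g i))) * σ g := by
  classical
  set ℓ := lastIdx n hn
  set s := Equiv.swap ℓ i with hs_def
  set t := Equiv.swap ℓ (g i) with ht_def
  have hs : s * s = 1 := Equiv.swap_mul_self _ _
  have ht : t * t = 1 := Equiv.swap_mul_self _ _
  have hmem : t * g * s ∈ stabLast n hn := by
    show (t * g * s) • ℓ = ℓ
    simp only [Equiv.Perm.smul_def, Equiv.Perm.mul_apply, hs_def, ht_def]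
    rw [Equiv.swap_apply_left, Equiv.swap_apply_right]
  have hc := hφ _ hmem
  have hσs : σ s * σ s = 1 := by rw [← map_mul, hs, map_one]
  have hσt : σ t * σ t = 1 := by rw [← map_mul, ht, map_one]
  have hσt' : ∀ x : Module.End ℂ X, σ t * (σ t * x) = x := fun x => by
    rw [← mul_assoc, hσt, one_mul]
  have e1 : σ t * (σ (t * g * s) * φ) * σ s = σ t * (φ * σ (t * g * s)) * σ s := by rw [hc]
  simp only [map_mul, mul_assoc, hσt'] at e1
  rw [hσs, mul_one] at e1
  simp only [mul_assoc]
  exact e1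

/-- The space `Hom_{S_n}(σ ⊗ refl, σ)` of `S_n`-equivariant linear maps `X ⊗ refl → X`. -/
def homTensorRefl (n : ℕ) {X : Type*} [AddCommGroup X] [Module ℂ X]
    (σ : Representation ℂ (Equiv.Perm (Fin n)) X) :
    Submodule ℂ ((X ⊗[ℂ] reflSpace n) →ₗ[ℂ] X) where
  carrier := {f | ∀ g : Equiv.Perm (Fin n),
    (σ g) ∘ₗ f = f ∘ₗ TensorProduct.map (σ g) (reflMap n g)}
  add_mem' := fun ha hb g => by
    simp only [LinearMap.comp_add, LinearMap.add_comp, ha g, hb g]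
  zero_mem' := fun g => by simp
  smul_mem' := fun c a ha g => by
    simp only [LinearMap.comp_smul, LinearMap.smul_comp, ha g]

lemma commute_all {n : ℕ} (hn : 0 < n) {X : Type*} [AddCommGroup X] [Module ℂ X]
    (σ : Representation ℂ (Equiv.Perm (Fin n)) X) (φ : Module.End ℂ X)
    (hφ : ∀ h ∈ stabLast n hn, σ h * φ = φ * σ h)
    (hbot : homTensorRefl n σ = ⊥) (g : Equiv.Perm (Fin n)) :
    σ g * φ = φ * σ g := by
  classical
  set ℓ := lastIdx n hn with hℓ
  set φi : Fin n → Module.End ℂ X :=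
    fun i => σ (Equiv.swap ℓ i) * φ * σ (Equiv.swap ℓ i) with hφi
  have hconj : ∀ (g' : Equiv.Perm (Fin n)) (i : Fin n),
      σ g' * φi i = φi (g' i) * σ g' := fun g' i => conj_swap hn σ φ hφ g' i
  -- bilinear map
  set B : X →ₗ[ℂ] (reflSpace n) →ₗ[ℂ] X :=
    LinearMap.mk₂ ℂ (fun x w => ∑ i, (w : Fin n → ℂ) i • φi i x)
      (fun x y w => by simp [map_add, smul_add, Finset.sum_add_distrib])
      (fun c x w => by simp [map_smul, smul_comm c, Finset.smul_sum])
      (fun x w w' => by simp [add_smul, Finset.sum_add_distrib])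
      (fun c x w => by simp [mul_smul, Finset.smul_sum]) with hB
  set f : (X ⊗[ℂ] reflSpace n) →ₗ[ℂ] X := TensorProduct.lift B with hf_def
  have hf_tmul : ∀ (x : X) (w : reflSpace n),
      f (x ⊗ₜ w) = ∑ i, (w : Fin n → ℂ) i • φi i x := fun x w => rfl
  have hf : f ∈ homTensorRefl n σ := by
    intro g'
    apply TensorProduct.ext'
    intro x w
    simp only [LinearMap.comp_apply, TensorProduct.map_tmul, hf_tmul]
    rw [map_sum]
    simp only [map_smul]
    rw [reflMap_coe]
    refine Fintype.sum_equiv g' _ _ ?_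
    intro j
    simp only [Equiv.Perm.inv_def, Equiv.symm_apply_apply]
    congr 1
    have := congrArg (fun ψ : Module.End ℂ X => ψ x) (hconj g' j)
    simpa [Module.End.mul_apply] using this
  rw [hbot, Submodule.mem_bot] at hf
  have hval : ∀ (i : Fin n) (x : X), φi i x = φi ℓ x := by
    intro i x
    have h0 : f (x ⊗ₜ (vvS hn i - vvS hn ℓ)) = 0 := by rw [hf]; rfl
    rw [hf_tmul] at h0
    have hcoe : ∀ j, ((vvS hn i - vvS hn ℓ : reflSpace n) : Fin n → ℂ) j =
        (if j = i then (1:ℂ) else 0) - (if j = ℓ then (1:ℂ) else 0) := by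
      intro j
      show vv n i j - vv n ℓ j = _
      simp [vv]
    simp only [hcoe, sub_smul, Finset.sum_sub_distrib, ite_smul, one_smul, zero_smul,
      Finset.sum_ite_eq', Finset.mem_univ, if_true] at h0
    exact sub_eq_zero.mp h0
  have hφℓ : φi ℓ = φ := by
    have h1 : σ (Equiv.swap ℓ ℓ) = 1 := by
      rw [show Equiv.swap ℓ ℓ = 1 from by rw [Equiv.swap_self]; rfl, map_one]
    show σ (Equiv.swap ℓ ℓ) * φ * σ (Equiv.swap ℓ ℓ) = φ
    rw [h1, one_mul, mul_one]
  have hφi_eq : ∀ i, φi i = φ := by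
    intro i
    apply LinearMap.ext
    intro x
    rw [hval i x, hφℓ]
  have hfin := hconj g ℓ
  rwa [hφℓ, hφi_eq (g ℓ)] at hfin

/-- For an irreducible complex representation `σ` of `S_n` (`n ≥ 2`),
`Hom_{S_n}(σ ⊗ refl, σ) = 0` if and only if the restriction of `σ` to `S_{n-1}` (the stabilizer
of the letter `n`) is irreducible. -/
theorem hom_tensor_refl_eq_bot_iff (n : ℕ) (hn : 2 ≤ n)
    {X : Type*} [AddCommGroup X] [Module ℂ X] [FiniteDimensional ℂ X] [Nontrivial X]
    (σ : Representation ℂ (Equiv.Perm (Fin n)) X)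
    (hirr : ∀ U : Submodule ℂ X,
      (∀ g : Equiv.Perm (Fin n), ∀ x ∈ U, σ g x ∈ U) → U = ⊥ ∨ U = ⊤) :
    homTensorRefl n σ = ⊥ ↔
      (∀ U : Submodule ℂ X,
        (∀ h ∈ stabLast n (by omega : 0 < n), ∀ x ∈ U, σ h x ∈ U) → U = ⊥ ∨ U = ⊤) := by
  have hn0 : 0 < n := by omega
  have hnC : (n : ℂ) ≠ 0 := Nat.cast_ne_zero.mpr hn0.ne'
  set ℓ := lastIdx n hn0 with hℓ
  constructor
  · -- Hom = 0 → restriction irreducible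
    intro hbot U hU
    obtain ⟨φ, hφc, hφmem, hφid⟩ := avg_proj hn0 σ U hU
    have hall : ∀ g, σ g * φ = φ * σ g := commute_all hn0 σ φ hφc hbot
    obtain ⟨c, hc⟩ := schur_scalar (fun g : Equiv.Perm (Fin n) => σ g)
      (fun U' hU' => hirr U' fun g x hx => hU' g x hx) φ hall
    by_cases hUbot : U = ⊥
    · exact Or.inl hUbot
    · right
      obtain ⟨x, hxU, hx0⟩ := (Submodule.ne_bot_iff U).mp hUbot
      have hx : x = c • x := by rw [← hc x, hφid x hxU]
      have hc1 : c = 1 := by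
        by_contra hc1
        have : (c - 1) • x = 0 := by rw [sub_smul, one_smul, ← hx, sub_self]
        rcases smul_eq_zero.mp this with h | h
        · exact hc1 (by linear_combination h)
        · exact hx0 h
      rw [Submodule.eq_top_iff']
      intro y
      have : φ y = y := by rw [hc y, hc1, one_smul]
      rw [← this]
      exact hφmem y
  · -- restriction irreducible → Hom = 0
    intro hres
    rw [Submodule.eq_bot_iff]
    intro f hf
    have hψ : ∀ (g : Equiv.Perm (Fin n)) (x : X) (w : reflSpace n),
        σ g (f (x ⊗ₜ w)) = f (σ g x ⊗ₜ reflMap n g w) := by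
      intro g x w
      have := congrArg (fun F : (X ⊗[ℂ] reflSpace n) →ₗ[ℂ] X => F (x ⊗ₜ w)) (hf g)
      simpa using this
    have hgg : ∀ (g : Equiv.Perm (Fin n)) (y : X), σ g (σ g⁻¹ y) = y := by
      intro g y
      rw [← Module.End.mul_apply, ← map_mul, mul_inv_cancel, map_one, Module.End.one_apply]
    set ψℓ : Module.End ℂ X :=
      f ∘ₗ ((TensorProduct.mk ℂ X (reflSpace n)).flip (vvS hn0 ℓ)) with hψℓ
    have hψℓ_apply : ∀ x, ψℓ x = f (x ⊗ₜ vvS hn0 ℓ) := fun x => rfl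
    have hcomm : ∀ h : stabLast n hn0, σ ↑h * ψℓ = ψℓ * σ ↑h := by
      intro h
      apply LinearMap.ext
      intro x
      have hhl : (↑h : Equiv.Perm (Fin n)) ℓ = ℓ := h.2
      simp only [Module.End.mul_apply, hψℓ_apply]
      rw [hψ ↑h x (vvS hn0 ℓ), reflMap_vvS, hhl]
    obtain ⟨c, hc⟩ := schur_scalar (fun h : stabLast n hn0 => σ ↑h)
      (fun U' hU' => hres U' fun h hh x hx => hU' ⟨h, hh⟩ x hx) ψℓ hcomm
    have hall_i : ∀ (i : Fin n) (x : X), f (x ⊗ₜ vvS hn0 i) = c • x := by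
      intro i x
      set g := Equiv.swap ℓ i with hg
      have h1 := hψ g (σ g⁻¹ x) (vvS hn0 ℓ)
      rw [reflMap_vvS, hgg g x] at h1
      rw [hg] at h1
      rw [Equiv.swap_apply_left] at h1
      rw [← hg] at h1
      have h2 : f (σ g⁻¹ x ⊗ₜ vvS hn0 ℓ) = c • σ g⁻¹ x := by
        rw [← hψℓ_apply, hc]
      rw [h2, map_smul, hgg g x] at h1
      exact h1.symm
    have hc0 : c = 0 := by
      obtain ⟨x₀, hx₀⟩ := exists_ne (0 : X)
      have hsum : ∑ i, f (x₀ ⊗ₜ vvS hn0 i) = 0 := by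
        rw [← map_sum, ← TensorProduct.tmul_sum, sum_vvS hn0, TensorProduct.tmul_zero, map_zero]
      rw [Finset.sum_congr rfl (fun i _ => hall_i i x₀)] at hsum
      rw [Finset.sum_const, Finset.card_univ, Fintype.card_fin,
        ← Nat.cast_smul_eq_nsmul ℂ, smul_smul] at hsum
      rcases smul_eq_zero.mp hsum with h | h
      · rcases mul_eq_zero.mp h with h' | h'
        · exact absurd h' hnC
        · exact h'
      · exact absurd h hx₀
    have hzero : ∀ (x : X) (i : Fin n), f (x ⊗ₜ vvS hn0 i) = 0 := by
      intro x i
      rw [hall_i i x, hc0, zero_smul]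
    apply TensorProduct.ext'
    intro x w
    rw [eq_sum_vvS hn0 w, TensorProduct.tmul_sum, map_sum]
    simp [TensorProduct.tmul_smul, hzero]

end
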